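/- Let P be a finite poset of cardinality n ≥ 2 in which every element x satisfies |{y ∈ P : y > x}| ≤ υ (maximum outdegree at most υ) and |{y ∈ P : y < x}| ≤ δ (maximum indegree at most δ). Then the 2-dimension of P is at most ⌈e·(υ + 2)·(log n + log(υ + 2) + log(δ + 2) + 1)⌉. -/

import Mathlib

/-!
Colour the pairs `(x, i) ∈ P × Fin d` independently and uniformly with `υ + 2` colours, and send
`a` to the set of coordinates `i` at which no element of the up-set `↑a` has colour `0`. This map
is monotone, and it reflects the order once every pair `a ≰ b` has a coordinate where `b` has
colour `0` and `↑a` avoids it. For a fixed pair this fails at all `d` coordinates with probability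
at most `(1 - 1/(e(υ+2)))^d ≤ exp(-d/(e(υ+2)))`, since `|↑a| ≤ υ + 1`. The failure event only
depends on the colours of `{b} ∪ ↑a`, and each element lies in such a set for at most `(δ+2)n`
pairs, so each failure event shares variables with at most `(υ+2)(δ+2)n` of them. The symmetric
Lovász Local Lemma, here in counting form, then yields a good colouring for the stated `d`.
-/

/-- The 2-dimension of a poset `P`: the least `d` such that there is an order
embedding of `P` into the powerset of `{1,…,d}` ordered by inclusion. -/
noncomputable def dim2 (P : Type*) [PartialOrder P] : ℕ :=
  sInf {d : ℕ | ∃ f : P → Finset (Fin d), ∀ a b : P, (f a ⊆ f b ↔ a ≤ b)}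

open Finset

lemma exp_neg_one_le_one_sub_inv_pow (k : ℕ) : Real.exp (-1) ≤ (1 - ((k : ℝ) + 1)⁻¹) ^ k := by
  rcases k.eq_zero_or_pos with rfl | hk
  · simp
  have hk' : (0 : ℝ) < k := Nat.cast_pos.2 hk
  have : 1 - ((k : ℝ) + 1)⁻¹ = (1 + (k : ℝ)⁻¹)⁻¹ := by field_simp; ring
  rw [this, inv_pow, Real.exp_neg]
  exact inv_anti₀ (by positivity) Real.one_add_inv_pow_le_exp

section LovaszLocalLemma

variable {Ω ι : Type*} [Fintype Ω] [DecidableEq Ω] (B : ι → Finset Ω)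

def avoiding (S : Finset ι) : Finset Ω := {ω | ∀ k ∈ S, ω ∉ B k}

variable {B}

@[simp]
lemma mem_avoiding {S : Finset ι} {ω : Ω} : ω ∈ avoiding B S ↔ ∀ k ∈ S, ω ∉ B k := by
  simp [avoiding]

lemma avoiding_empty : avoiding B ∅ = univ := by
  ext; simp

lemma avoiding_insert [DecidableEq ι] (a : ι) (S : Finset ι) :
    avoiding B (insert a S) = avoiding B S \ B a := by
  ext; simp [and_comm]

lemma avoiding_anti {S T : Finset ι} (h : S ⊆ T) : avoiding B T ⊆ avoiding B S := fun _ hω ↦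
  mem_avoiding.2 fun k hk ↦ mem_avoiding.1 hω k (h hk)

lemma inter_avoiding_eq_empty {j : ι} {S : Finset ι} (hj : j ∈ S) : B j ∩ avoiding B S = ∅ :=
  eq_empty_of_forall_notMem fun _ hω ↦ mem_avoiding.1 (mem_inter.1 hω).2 j hj (mem_inter.1 hω).1

lemma one_sub_mul_card_avoiding_le [DecidableEq ι] {x : ℝ} {a : ι} {S : Finset ι}
    (h : #(B a ∩ avoiding B S) ≤ x * #(avoiding B S)) :
    (1 - x) * #(avoiding B S) ≤ #(avoiding B (insert a S)) := by
  have hsplit := card_sdiff_add_card_inter (avoiding B S) (B a)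
  rw [inter_comm] at hsplit
  rw [avoiding_insert]
  have : (#(avoiding B S \ B a) : ℝ) + #(B a ∩ avoiding B S) = #(avoiding B S) := by
    exact_mod_cast hsplit
  linarith

lemma pow_mul_card_avoiding_le [DecidableEq ι] {x : ℝ} (hx : x ≤ 1) (S : Finset ι)
    {R : Finset ι} (h : ∀ T ⊆ R, ∀ a ∈ R, a ∉ T →
      #(B a ∩ avoiding B (S ∪ T)) ≤ x * #(avoiding B (S ∪ T))) :
    (1 - x) ^ #R * #(avoiding B S) ≤ #(avoiding B (S ∪ R)) := by
  induction R using Finset.induction_on with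
  | empty => simp
  | insert a R ha ih =>
    have ih := ih fun T hT b hb ↦ h T (hT.trans (subset_insert a R)) b (mem_insert_of_mem hb)
    have step := one_sub_mul_card_avoiding_le (h R (subset_insert a R) a (mem_insert_self a R) ha)
    rw [card_insert_of_notMem ha, pow_succ, mul_comm _ (1 - x), mul_assoc, union_insert]
    exact (mul_le_mul_of_nonneg_left ih (by linarith)).trans step

variable [DecidableEq ι] {Γ : ι → Finset ι} {x : ℝ} {D : ℕ}

theorem card_inter_avoiding_le [Nonempty Ω] (hx₀ : 0 ≤ x) (hx₁ : x ≤ 1) (hself : ∀ j, j ∈ Γ j)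
    (hΓ : ∀ j, #(Γ j) ≤ D + 1) (hB : ∀ j, #(B j) ≤ x * (1 - x) ^ D * Fintype.card Ω)
    (hindep : ∀ j S, Disjoint S (Γ j) →
      #(B j ∩ avoiding B S) * Fintype.card Ω = (#(B j) * #(avoiding B S) : ℝ))
    (S : Finset ι) (j : ι) : #(B j ∩ avoiding B S) ≤ x * #(avoiding B S) := by
  induction S using Finset.strongInduction generalizing j with
  | H S ih =>
  by_cases hjS : j ∈ S
  · rw [inter_avoiding_eq_empty hjS, card_empty, Nat.cast_zero]
    positivity
  set S₁ := S ∩ Γ j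
  set S₂ := S \ Γ j
  have hS₁ : #S₁ ≤ D := by
    have := card_le_card (subset_erase.2 ⟨inter_subset_right, fun h ↦ hjS (mem_inter.1 h).1⟩ :
      S₁ ⊆ (Γ j).erase j)
    have := card_erase_of_mem (hself j)
    have := hΓ j
    omega
  have hS₂ : #(B j ∩ avoiding B S₂) ≤ x * (1 - x) ^ D * #(avoiding B S₂) := by
    refine le_of_mul_le_mul_right ?_ (Nat.cast_pos.2 Fintype.card_pos : (0 : ℝ) < Fintype.card Ω)
    rw [hindep j S₂ disjoint_sdiff_self_left, mul_right_comm]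
    gcongr
    exact hB j
  -- add the neighbours of `j` in `S` one by one; each step applies `ih` to a proper subset of `S`
  have hchain : (1 - x) ^ #S₁ * #(avoiding B S₂) ≤ #(avoiding B S) := by
    have := pow_mul_card_avoiding_le hx₁ S₂ (R := S₁) fun T hT a ha haT ↦ ih (S₂ ∪ T) ?_ a
    · rwa [sdiff_union_inter] at this
    have haS₂ : a ∉ S₂ := fun h ↦ (mem_sdiff.1 h).2 (mem_inter.1 ha).2
    refine (ssubset_iff_of_subset (union_subset sdiff_subset (hT.trans inter_subset_left))).2
      ⟨a, (mem_inter.1 ha).1, fun h ↦ (mem_union.1 h).elim haS₂ haT⟩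
  calc (#(B j ∩ avoiding B S) : ℝ) ≤ #(B j ∩ avoiding B S₂) := by
        exact_mod_cast card_le_card (inter_subset_inter_left (avoiding_anti sdiff_subset))
    _ ≤ x * (1 - x) ^ D * #(avoiding B S₂) := hS₂
    _ ≤ x * ((1 - x) ^ #S₁ * #(avoiding B S₂)) := by
        rw [mul_assoc]
        gcongr x * (?_ * _)
        exact pow_le_pow_of_le_one (by linarith) (by linarith) hS₁
    _ ≤ x * #(avoiding B S) := by gcongr

theorem exists_forall_notMem_of_lovasz [Fintype ι] [Nonempty Ω] (hx₀ : 0 ≤ x) (hx₁ : x < 1)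
    (hself : ∀ j, j ∈ Γ j) (hΓ : ∀ j, #(Γ j) ≤ D + 1)
    (hB : ∀ j, #(B j) ≤ x * (1 - x) ^ D * Fintype.card Ω)
    (hindep : ∀ j S, Disjoint S (Γ j) →
      #(B j ∩ avoiding B S) * Fintype.card Ω = (#(B j) * #(avoiding B S) : ℝ)) :
    ∃ ω, ∀ j, ω ∉ B j := by
  have hlow := pow_mul_card_avoiding_le hx₁.le ∅ (R := univ) fun T _ a _ _ ↦
    card_inter_avoiding_le hx₀ hx₁.le hself hΓ hB hindep _ a
  rw [empty_union, avoiding_empty, card_univ] at hlow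
  have hpos : (0 : ℝ) < #(avoiding B univ) :=
    lt_of_lt_of_le (by have := sub_pos.2 hx₁; positivity) hlow
  obtain ⟨ω, hω⟩ := card_pos.1 (Nat.cast_pos.1 hpos)
  exact ⟨ω, fun j ↦ mem_avoiding.1 hω j (mem_univ j)⟩

theorem exists_forall_notMem_of_symmetric_lovasz [Fintype ι] [Nonempty Ω] {p : ℝ}
    (hself : ∀ j, j ∈ Γ j) (hΓ : ∀ j, #(Γ j) ≤ D + 1)
    (hB : ∀ j, #(B j) ≤ p * Fintype.card Ω) (hp : Real.exp 1 * p * (D + 1) ≤ 1)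
    (hindep : ∀ j S, Disjoint S (Γ j) →
      #(B j ∩ avoiding B S) * Fintype.card Ω = (#(B j) * #(avoiding B S) : ℝ)) :
    ∃ ω, ∀ j, ω ∉ B j := by
  set x : ℝ := ((D : ℝ) + 2)⁻¹
  have hx₀ : 0 ≤ x := by positivity
  have hx₁ : x < 1 := inv_lt_one_of_one_lt₀ (by linarith [(D.cast_nonneg : (0 : ℝ) ≤ D)])
  -- this choice makes `x (1 - x) ^ D = (1 - x) ^ (D + 1) / (D + 1)` with `(1 - x) ^ (D + 1) ≥ 1 / e`
  have hpx : p ≤ x * (1 - x) ^ D := by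
    have hD : (0 : ℝ) < D + 1 := by positivity
    have hsub : 1 - x = (D + 1) * x := by
      have : x * (D + 2) = 1 := inv_mul_cancel₀ (by positivity)
      linarith
    have he : Real.exp (-1) ≤ (1 - x) ^ (D + 1) := by
      convert exp_neg_one_le_one_sub_inv_pow (D + 1) using 3
      push_cast; ring
    have hpD : p * (D + 1) ≤ Real.exp (-1) := by
      rw [Real.exp_neg, ← one_div, le_div_iff₀' (Real.exp_pos 1), ← mul_assoc]
      exact hp
    calc p = p * (D + 1) / (D + 1) := by field_simp
      _ ≤ (1 - x) ^ (D + 1) / (D + 1) := by gcongr; exact hpD.trans he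
      _ = x * (1 - x) ^ D := by rw [pow_succ', hsub]; field_simp
  refine exists_forall_notMem_of_lovasz hx₀ hx₁ hself hΓ (fun j ↦ (hB j).trans ?_) hindep
  gcongr

end LovaszLocalLemma

theorem card_inter_mul_card_eq_of_dependsOn {α : Type*} {V : α → Type*} [Fintype α]
    [DecidableEq α] [∀ a, Fintype (V a)] [∀ a, DecidableEq (V a)] {s : Set α}
    [DecidablePred (· ∈ s)] {E F : Finset (∀ a, V a)} (hE : DependsOn (· ∈ E) s)
    (hF : DependsOn (· ∈ F) sᶜ) : #(E ∩ F) * Fintype.card (∀ a, V a) = #E * #F := by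
  rw [← card_univ, ← card_product, ← card_product]
  -- exchanging the coordinates outside `s` between the two components is an involution that
  -- maps `(E ∩ F) × univ` onto `E × F`
  let swap (ω : (∀ a, V a) × (∀ a, V a)) := (s.piecewise ω.1 ω.2, s.piecewise ω.2 ω.1)
  have hswap : ∀ ω, swap (swap ω) = ω := fun ω ↦ by
    ext a <;> by_cases ha : a ∈ s <;> simp [swap, ha]
  have hE' : ∀ ω ω', (s.piecewise ω ω' ∈ E) = (ω ∈ E) := fun ω ω' ↦
    hE fun a ha ↦ s.piecewise_eq_of_mem _ _ ha
  have hF' : ∀ ω ω', (s.piecewise ω ω' ∈ F) = (ω' ∈ F) := fun ω ω' ↦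
    hF fun a ha ↦ s.piecewise_eq_of_notMem _ _ ha
  refine card_nbij' swap swap (fun ω hω ↦ ?_) (fun ω hω ↦ ?_) (fun ω _ ↦ hswap ω)
    (fun ω _ ↦ hswap ω)
  · simp_all [swap]
  · simp_all [swap]

theorem exists_forall_notMem_of_dependsOn {α ι : Type*} {V : α → Type*} [Fintype α]
    [DecidableEq α] [∀ a, Fintype (V a)] [∀ a, DecidableEq (V a)] [∀ a, Nonempty (V a)]
    [Fintype ι] [DecidableEq ι] (B : ι → Finset (∀ a, V a)) (vars : ι → Finset α) {p : ℝ}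
    {r s : ℕ} (hdep : ∀ j, DependsOn (· ∈ B j) (vars j : Set α)) (hvars : ∀ j, (vars j).Nonempty)
    (hr : ∀ j, #(vars j) ≤ r) (hs : ∀ a, #{j | a ∈ vars j} ≤ s)
    (hB : ∀ j, #(B j) ≤ p * Fintype.card (∀ a, V a)) (hp : Real.exp 1 * p * (r * s) ≤ 1) :
    ∃ ω, ∀ j, ω ∉ B j := by
  let Γ (j : ι) : Finset ι := {k | ¬Disjoint (vars j) (vars k)}
  have hself (j : ι) : j ∈ Γ j := by
    simpa [Γ] using (hvars j).ne_empty
  have hΓ (j : ι) : #(Γ j) ≤ r * s := by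
    have : Γ j ⊆ (vars j).biUnion fun a ↦ {k | a ∈ vars k} := fun k hk ↦ by
      obtain ⟨a, ha, ha'⟩ := not_disjoint_iff.1 (mem_filter.1 hk).2
      exact mem_biUnion.2 ⟨a, ha, mem_filter.2 ⟨mem_univ k, ha'⟩⟩
    calc #(Γ j) ≤ ∑ a ∈ vars j, #{k | a ∈ vars k} := (card_le_card this).trans card_biUnion_le
      _ ≤ #(vars j) * s := sum_le_card_nsmul _ _ _ fun a _ ↦ hs a
      _ ≤ r * s := Nat.mul_le_mul_right s (hr j)
  have hindep (j : ι) (S : Finset ι) (hS : Disjoint S (Γ j)) :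
      #(B j ∩ avoiding B S) * Fintype.card (∀ a, V a) = (#(B j) * #(avoiding B S) : ℝ) := by
    refine mod_cast card_inter_mul_card_eq_of_dependsOn (hdep j) fun ω ω' h ↦ ?_
    simp only [mem_avoiding]
    refine propext (forall₂_congr fun k hk ↦ ?_)
    have hjk : Disjoint (vars j) (vars k) := by
      simpa [Γ] using disjoint_left.1 hS hk
    exact not_congr (Iff.of_eq (hdep k fun a ha ↦ h a (disjoint_right.1 hjk ha)))
  cases isEmpty_or_nonempty ι with
  | inl => exact ⟨Classical.arbitrary _, isEmptyElim⟩
  | inr hι =>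
    obtain ⟨D, hD⟩ : ∃ D, r * s = D + 1 :=
      Nat.exists_eq_add_one.2 (card_pos.2 ⟨_, hself hι.some⟩ |>.trans_le (hΓ hι.some))
    have hD' : (r : ℝ) * s = D + 1 := mod_cast hD
    exact exists_forall_notMem_of_symmetric_lovasz hself (fun j ↦ hD ▸ hΓ j) hB (hD' ▸ hp) hindep

section Counting

variable {α β M : Type*} [Fintype α] [DecidableEq α] [Fintype M] [DecidableEq M]

lemma card_filter_forall_apply_mem [Fintype β] [DecidableEq β] (W : Finset (α → M)) :
    #{ω : α → β → M | ∀ i, (fun a ↦ ω a i) ∈ W} = #W ^ Fintype.card β := by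
  calc _ = #(Fintype.piFinset fun _ : β ↦ W) :=
        card_equiv (Equiv.piComm fun _ _ ↦ M) fun ω ↦ by simp [Equiv.piComm]
    _ = #W ^ Fintype.card β := by simp [Fintype.card_piFinset]

lemma card_filter_eq_and_forall_ne (c : M) {b : α} {U : Finset α} (hb : b ∉ U) :
    #{h : α → M | h b = c ∧ ∀ y ∈ U, h y ≠ c} =
      (Fintype.card M - 1) ^ #U * Fintype.card M ^ (Fintype.card α - (#U + 1)) := by
  let A (y : α) : Finset M := if y = b then {c} else if y ∈ U then {c}ᶜ else univ
  have hG : ({h | h b = c ∧ ∀ y ∈ U, h y ≠ c} : Finset (α → M)) = Fintype.piFinset A := by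
    ext h
    simp only [mem_filter, mem_univ, true_and, Fintype.mem_piFinset]
    constructor
    · rintro ⟨hb', hU⟩ y
      by_cases hy : y = b
      · simp [A, hy, hb']
      by_cases hyU : y ∈ U <;> simp [A, hy, hyU, hU]
    · intro h
      refine ⟨by simpa [A] using h b, fun y hy ↦ ?_⟩
      have hyb : y ≠ b := by rintro rfl; exact hb hy
      simpa [A, hyb, hy] using h y
  rw [hG, Fintype.card_piFinset, ← prod_mul_prod_compl (insert b U), prod_insert hb,
    prod_congr rfl (g := fun _ ↦ Fintype.card M - 1), prod_const,
    prod_congr rfl (g := fun _ ↦ Fintype.card M), prod_const, card_compl,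
    card_insert_of_notMem hb]
  · simp [A]
  · intro y hy
    simp only [mem_compl, mem_insert, not_or] at hy
    simp [A, hy.1, hy.2]
  · intro y hy
    have hyb : y ≠ b := by rintro rfl; exact hb hy
    simp [A, hyb, hy, card_compl]

lemma pow_card_le_exp_mul_card_filter (c : M) {b : α} {U : Finset α} (hb : b ∉ U)
    (hU : #U + 1 ≤ Fintype.card M) :
    (Fintype.card M : ℝ) ^ Fintype.card α ≤
      Real.exp 1 * Fintype.card M * #{h : α → M | h b = c ∧ ∀ y ∈ U, h y ≠ c} := by
  obtain ⟨k, hk⟩ : ∃ k, Fintype.card M = k + 1 := Nat.exists_eq_add_one.2 (by omega)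
  have hn : #U + 1 ≤ Fintype.card α := by
    simpa [card_insert_of_notMem hb] using card_le_univ (insert b U)
  have hk' : (1 : ℝ) - ((k : ℝ) + 1)⁻¹ = k / (k + 1) := by field_simp; ring
  have hpow : ((k : ℝ) + 1) ^ #U ≤ Real.exp 1 * k ^ #U := by
    have h := exp_neg_one_le_one_sub_inv_pow k
    rw [hk'] at h
    have h := h.trans (pow_le_pow_of_le_one (by positivity)
      (div_le_one_of_le₀ (by linarith) (by positivity)) (by omega : #U ≤ k))
    calc ((k : ℝ) + 1) ^ #U = Real.exp 1 * (Real.exp (-1) * (k + 1) ^ #U) := by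
          rw [← mul_assoc, ← Real.exp_add]; simp
      _ ≤ Real.exp 1 * ((k / (k + 1)) ^ #U * (k + 1) ^ #U) := by gcongr
      _ = Real.exp 1 * k ^ #U := by rw [div_pow]; field_simp
  rw [card_filter_eq_and_forall_ne c hb, hk, Nat.add_sub_cancel, ← Nat.sub_add_cancel hn]
  push_cast
  rw [Nat.add_sub_cancel, pow_add, pow_succ]
  calc _ ≤ ((k : ℝ) + 1) ^ (Fintype.card α - (#U + 1)) * (Real.exp 1 * k ^ #U * (k + 1)) := by
        gcongr
    _ = _ := by ring

lemma card_filter_forall_not_le [Fintype β] [DecidableEq β] (c : M) {b : α} {U : Finset α}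
    (hb : b ∉ U) (hU : #U + 1 ≤ Fintype.card M) :
    #{ω : α → β → M | ∀ i, ¬(ω b i = c ∧ ∀ y ∈ U, ω y i ≠ c)} ≤
      Real.exp (-(Fintype.card β / (Real.exp 1 * Fintype.card M))) *
        Fintype.card (α → β → M) := by
  set G : Finset (α → M) := {h | h b = c ∧ ∀ y ∈ U, h y ≠ c}
  set m : ℝ := (Fintype.card M : ℝ) with hm_def
  have hm : 1 ≤ m := Nat.one_le_cast.2 (by omega)
  have hem : 1 ≤ Real.exp 1 * m := by nlinarith [Real.add_one_le_exp 1]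
  have hGc : (#Gᶜ : ℝ) ≤ (1 - (Real.exp 1 * m)⁻¹) * m ^ Fintype.card α := by
    have hG : (Real.exp 1 * m)⁻¹ * m ^ Fintype.card α ≤ #G := by
      rw [inv_mul_le_iff₀ (by positivity)]
      exact pow_card_le_exp_mul_card_filter c hb hU
    rw [card_compl, Nat.cast_sub (card_le_univ G), Fintype.card_fun]
    push_cast
    linarith
  have hcard : #{ω : α → β → M | ∀ i, ¬(ω b i = c ∧ ∀ y ∈ U, ω y i ≠ c)} =
      #Gᶜ ^ Fintype.card β := by
    rw [← card_filter_forall_apply_mem]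
    congr 1
    ext; simp [G]
  rw [hcard]
  have h₀ : 0 ≤ 1 - (Real.exp 1 * m)⁻¹ := sub_nonneg.2 (inv_le_one_of_one_le₀ hem)
  push_cast
  calc (#Gᶜ : ℝ) ^ Fintype.card β
      ≤ ((1 - (Real.exp 1 * m)⁻¹) * m ^ Fintype.card α) ^ Fintype.card β := by gcongr
    _ ≤ (Real.exp (-(Real.exp 1 * m)⁻¹) * m ^ Fintype.card α) ^ Fintype.card β := by
        gcongr; exact Real.one_sub_le_exp_neg _
    _ = _ := by
        rw [mul_pow, ← Real.exp_nat_mul, Fintype.card_fun, Fintype.card_fun]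
        push_cast
        rw [← hm_def, ← pow_mul, ← pow_mul, mul_comm (Fintype.card α), mul_neg, ← div_eq_mul_inv]

end Counting

lemma exp_one_mul_exp_neg_div_mul_le_one {c d N : ℝ} (hc : 0 < c) (hN : 0 ≤ N)
    (hd : c * (Real.log N + 1) ≤ d) : Real.exp 1 * Real.exp (-(d / c)) * N ≤ 1 := by
  rcases hN.eq_or_lt with rfl | hN
  · simp
  have : Real.log N + 1 ≤ d / c := (le_div_iff₀' hc).2 hd
  rw [← Real.exp_add, ← Real.exp_log hN, ← Real.exp_add]
  exact Real.exp_le_one_iff.2 (by linarith)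

section Poset

variable {P : Type*} [PartialOrder P]

lemma dim2_le_of_separating {M : Type*} (c : M) {d : ℕ} (ω : P → Fin d → M)
    (h : ∀ a b, ¬a ≤ b → ∃ i, ω b i = c ∧ ∀ y, a ≤ y → ω y i ≠ c) : dim2 P ≤ d := by
  classical
  refine Nat.sInf_le ⟨fun a ↦ {i | ∀ y, a ≤ y → ω y i ≠ c}, fun a b ↦ ⟨fun hab ↦ ?_, ?_⟩⟩
  · by_contra hab'
    obtain ⟨i, hbi, hai⟩ := h a b hab'
    exact (mem_filter.1 (hab (mem_filter.2 ⟨mem_univ i, hai⟩))).2 b le_rfl hbi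
  · intro hab i hi
    simp only [mem_filter, mem_univ, true_and] at hi ⊢
    exact fun y hby ↦ hi y (hab.trans hby)

variable [Fintype P] [DecidableLE P]

lemma card_filter_le_eq_ncard_add_one (x : P) : #{y | x ≤ y} = {y | x < y}.ncard + 1 := by
  have : (({y | x ≤ y} : Finset P) : Set P) = insert x {y | x < y} := by
    ext y; simp [le_iff_eq_or_lt, eq_comm]
  rw [← Set.ncard_coe_finset, this, Set.ncard_insert_of_notMem (by simp)]

lemma card_filter_ge_eq_ncard_add_one (x : P) : #{y | y ≤ x} = {y | y < x}.ncard + 1 :=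
  card_filter_le_eq_ncard_add_one (P := Pᵒᵈ) (OrderDual.toDual x)

lemma card_filter_mem_insert_le [DecidableEq P] (y : P) :
    #{j : {q : P × P // ¬q.1 ≤ q.2} | y ∈ insert j.1.2 ({z | j.1.1 ≤ z} : Finset P)} ≤
      (#{z | z ≤ y} + 1) * Fintype.card P := by
  calc _ ≤ #((univ ×ˢ {y}) ∪ (({z | z ≤ y} : Finset P) ×ˢ (univ : Finset P))) := by
        refine card_le_card_of_injOn Subtype.val (fun j hj ↦ ?_) Subtype.val_injective.injOn
        simp only [mem_insert, mem_filter, mem_univ, true_and, coe_filter, Set.mem_ofPred_eq] at hj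
        rcases hj with hj | hj <;> simp [hj]
    _ ≤ Fintype.card P + #{z | z ≤ y} * Fintype.card P := by
        refine (card_union_le _ _).trans ?_
        simp
    _ = (#{z | z ≤ y} + 1) * Fintype.card P := by ring

theorem exists_separating_coloring [DecidableEq P] {υ δ d : ℕ} (hout : ∀ x : P, {y | x < y}.ncard ≤ υ)
    (hin : ∀ x : P, {y | y < x}.ncard ≤ δ)
    (hd : Real.exp 1 * (υ + 2) * (Real.log ((υ + 2) * ((δ + 2) * Fintype.card P)) + 1) ≤ d) :
    ∃ ω : P → Fin d → Fin (υ + 2), ∀ a b, ¬a ≤ b → ∃ i, ω b i = 0 ∧ ∀ y, a ≤ y → ω y i ≠ 0 := by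
  let vars (j : {q : P × P // ¬q.1 ≤ q.2}) : Finset P := insert j.1.2 ({y | j.1.1 ≤ y} : Finset P)
  let B (j : {q : P × P // ¬q.1 ≤ q.2}) : Finset (P → Fin d → Fin (υ + 2)) :=
    {ω | ∀ i, ¬(ω j.1.2 i = 0 ∧ ∀ y ∈ ({y | j.1.1 ≤ y} : Finset P), ω y i ≠ 0)}
  have hdep (j) : DependsOn (· ∈ B j) (vars j : Set P) := by
    intro ω ω' h
    have hb : ω j.1.2 = ω' j.1.2 := h _ (mem_insert_self _ _)
    have hU (i) : (∀ y, j.1.1 ≤ y → ω y i ≠ 0) ↔ ∀ y, j.1.1 ≤ y → ω' y i ≠ 0 :=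
      forall₂_congr fun y hy ↦ by rw [h y (mem_insert_of_mem (by simpa using hy))]
    simp only [B, mem_filter, mem_univ, true_and, hb, hU]
  have hU (a : P) : #{y | a ≤ y} ≤ υ + 1 := by
    have := card_filter_le_eq_ncard_add_one a
    have := hout a
    omega
  have hr (j) : #(vars j) ≤ υ + 2 := (card_insert_le _ _).trans (by simpa using hU j.1.1)
  have hs (y : P) : #{j | y ∈ vars j} ≤ (δ + 2) * Fintype.card P := by
    have := card_filter_ge_eq_ncard_add_one y
    have := hin y
    exact (card_filter_mem_insert_le y).trans
      (Nat.mul_le_mul_right (Fintype.card P) (show #{z | z ≤ y} + 1 ≤ δ + 2 by omega))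
  have hB (j) : #(B j) ≤
      Real.exp (-(d / (Real.exp 1 * (υ + 2)))) * Fintype.card (P → Fin d → Fin (υ + 2)) := by
    have := card_filter_forall_not_le (β := Fin d) (0 : Fin (υ + 2)) (b := j.1.2)
      (U := {y | j.1.1 ≤ y}) (by simpa using j.2) (by simpa using hU j.1.1)
    simpa [B] using this
  have hp : Real.exp 1 * Real.exp (-(d / (Real.exp 1 * (υ + 2)))) *
      ((υ + 2 : ℕ) * ((δ + 2) * Fintype.card P : ℕ)) ≤ 1 := by
    exact_mod_cast exp_one_mul_exp_neg_div_mul_le_one (by positivity) (by positivity) hd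
  obtain ⟨ω, hω⟩ := exists_forall_notMem_of_dependsOn B vars hdep
    (fun j ↦ ⟨_, mem_insert_self _ _⟩) hr hs hB hp
  exact ⟨ω, fun a b hab ↦ by simpa [B] using hω ⟨(a, b), hab⟩⟩

end Poset

/-- A finite poset of cardinality `n ≥ 2` with maximum outdegree at most `υ` and
maximum indegree at most `δ` has 2-dimension at most
`⌈e(υ+2)(log n + log(υ+2) + log(δ+2) + 1)⌉`. -/
theorem dim2_le_of_outdegree_indegree (P : Type*) [PartialOrder P] [Fintype P]
    (n υ δ : ℕ) (hcard : Fintype.card P = n) (hn : 2 ≤ n)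
    (hout : ∀ x : P, Set.ncard {y : P | x < y} ≤ υ)
    (hin : ∀ x : P, Set.ncard {y : P | y < x} ≤ δ) :
    dim2 P ≤ ⌈Real.exp 1 * ((υ : ℝ) + 2) *
        (Real.log n + Real.log ((υ : ℝ) + 2) + Real.log ((δ : ℝ) + 2) + 1)⌉₊ := by
  have hn' : (n : ℝ) ≠ 0 := by norm_cast; omega
  have hd : Real.exp 1 * (υ + 2) * (Real.log ((υ + 2) * ((δ + 2) * Fintype.card P)) + 1) ≤
      ⌈Real.exp 1 * ((υ : ℝ) + 2) *
        (Real.log n + Real.log ((υ : ℝ) + 2) + Real.log ((δ : ℝ) + 2) + 1)⌉₊ := by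
    refine le_trans (le_of_eq ?_) (Nat.le_ceil _)
    rw [hcard, Real.log_mul (by positivity) (by positivity), Real.log_mul (by positivity) hn']
    ring
  classical
  obtain ⟨ω, hω⟩ := exists_separating_coloring hout hin hd
  exact dim2_le_of_separating 0 ω hω
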